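/- Let G and M be compact groups with M second countable, and let N be a closed subgroup of G with Haar probability measure m_N. Let C ⊆ G and I ⊆ M be Borel sets, and suppose there exist a continuous surjective homomorphism ξ : N → M, an m_G-conull Borel set X ⊆ G, and a map γ : X → M such that for every x ∈ X the sets x⁻¹C ∩ N and ξ⁻¹(I·γ(x)) agree up to an m_N-null set. If the right essential stabilizer of I in M is trivial, i.e. {t ∈ M : m_M(I Δ It) = 0} = {e}, then γ is Borel measurable on X. -/

import Mathlib

noncomputable section

/-- A compact group `S` together with a continuous surjective homomorphism onto `L`. -/
structure CompactGroupOver (L : Type*) [Group L] [TopologicalSpace L] where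
  S : Type
  [grp : Group S]
  [top : TopologicalSpace S]
  [tgrp : IsTopologicalGroup S]
  [cpt : CompactSpace S]
  p : S →* L
  pcont : Continuous p
  psurj : Function.Surjective p

attribute [instance] CompactGroupOver.grp CompactGroupOver.top
  CompactGroupOver.tgrp CompactGroupOver.cpt

open MeasureTheory Set Pointwise Function

noncomputable instance : MeasurableSpace Circle := borel Circle
instance : BorelSpace Circle := ⟨rfl⟩

/-- A closed interval (closed arc) in the circle group `𝕋 = Circle`. -/
def IsClosedArc (I : Set Circle) : Prop :=
  ∃ a b : ℝ, a ≤ b ∧ b - a ≤ 2 * Real.pi ∧ I = ⇑Circle.exp '' Set.Icc a b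

/-- The twisted torus `𝕋 ⋊ {-1,1}`, realized on `Circle × ℤˣ` with multiplication
`(a,ε)(b,δ) = (a·b^ε, εδ)`. -/
def TT : Type := Circle × ℤˣ

namespace TT

instance instTopologicalSpace : TopologicalSpace TT :=
  inferInstanceAs (TopologicalSpace (Circle × ℤˣ))
instance instMeasurableSpace : MeasurableSpace TT :=
  inferInstanceAs (MeasurableSpace (Circle × ℤˣ))
instance instCompactSpace : CompactSpace TT :=
  inferInstanceAs (CompactSpace (Circle × ℤˣ))
instance instT2Space : T2Space TT :=
  inferInstanceAs (T2Space (Circle × ℤˣ))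

/-- The circle component. -/
def circ (x : TT) : Circle := Prod.fst x

/-- The sign component. -/
def sgn (x : TT) : ℤˣ := Prod.snd x

/-- Build an element of `𝕋 ⋊ {-1,1}` from its components. -/
def mk' (a : Circle) (e : ℤˣ) : TT := ((a, e) : Circle × ℤˣ)

instance instMul : Mul TT :=
  ⟨fun x y => mk' (x.circ * y.circ ^ ((x.sgn : ℤˣ) : ℤ)) (x.sgn * y.sgn)⟩
instance instOne : One TT := ⟨mk' 1 1⟩
instance instInv : Inv TT :=
  ⟨fun x => mk' (x.circ ^ (-((x.sgn : ℤˣ) : ℤ))) x.sgn⟩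

@[simp] lemma mul_circ (x y : TT) :
    (x * y).circ = x.circ * y.circ ^ ((x.sgn : ℤˣ) : ℤ) := rfl
@[simp] lemma mul_sgn (x y : TT) : (x * y).sgn = x.sgn * y.sgn := rfl
@[simp] lemma one_circ : (1 : TT).circ = 1 := rfl
@[simp] lemma one_sgn : (1 : TT).sgn = 1 := rfl
@[simp] lemma inv_circ (x : TT) : (x⁻¹).circ = x.circ ^ (-((x.sgn : ℤˣ) : ℤ)) := rfl
@[simp] lemma inv_sgn (x : TT) : (x⁻¹).sgn = x.sgn := rfl

protected lemma ext {x y : TT} (h1 : x.circ = y.circ) (h2 : x.sgn = y.sgn) : x = y :=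
  Prod.ext h1 h2

instance instGroup : Group TT where
  mul_assoc x y z := by
    refine TT.ext ?_ ?_
    · simp [mul_zpow, ← zpow_mul, mul_assoc]
      rw [mul_comm ((x.sgn : ℤˣ) : ℤ)]
    · simp [mul_assoc]
  one_mul x := by refine TT.ext ?_ ?_ <;> simp
  mul_one x := by refine TT.ext ?_ ?_ <;> simp
  inv_mul_cancel x := by
    refine TT.ext ?_ ?_ <;> simp [← zpow_mul, Int.units_mul_self]

end TT

/-- The subset `I ⋊ {-1,1}` of `𝕋 ⋊ {-1,1}` attached to a subset `I ⊆ 𝕋`. -/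
def TT.lift (I : Set Circle) : Set TT := {x : TT | x.circ ∈ I}

section Defs

variable {G : Type*}

/-- `(A,B)` is a critical pair: both sets are Borel of positive measure and
`m(AB) = min(1, m(A)+m(B))`. -/
def IsCriticalPair [Group G] [MeasurableSpace G] (m : Measure G) (A B : Set G) : Prop :=
  MeasurableSet A ∧ MeasurableSet B ∧ 0 < m A ∧ 0 < m B ∧
    m (A * B) = min 1 (m A + m B)

/-- `(A,B)` is a sub-critical pair: both sets are Borel of positive measure and
`m(AB) < min(1, m(A)+m(B))`. -/
def IsSubCriticalPair [Group G] [MeasurableSpace G] (m : Measure G) (A B : Set G) : Prop :=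
  MeasurableSet A ∧ MeasurableSet B ∧ 0 < m A ∧ 0 < m B ∧
    m (A * B) < min 1 (m A + m B)

/-- `(S,T)` is a sub-critical pair in the open subgroup `U` with respect to the Haar
probability measure of `U`; in terms of the ambient Haar probability measure `m` this
reads `m(ST) < min (m U) (m S + m T)`, since the Haar probability measure of `U` is
`m(· ∩ U)/m(U)`. -/
def SubCriticalInOpen [Group G] [MeasurableSpace G] (m : Measure G) (U : Subgroup G)
    (S T : Set G) : Prop :=
  MeasurableSet S ∧ MeasurableSet T ∧ S ⊆ (U : Set G) ∧ T ⊆ (U : Set G) ∧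
    0 < m S ∧ 0 < m T ∧ m (S * T) < min (m (U : Set G)) (m S + m T)

/-- `(A,B)` is almost sub-critical in the open normal subgroup `U`: there are conull
Borel subsets `A' ⊆ A`, `B' ⊆ B` and `p, q ∈ G` such that `(p⁻¹A' ∩ U, B'q⁻¹ ∩ U)` is
a sub-critical pair in `U`. -/
def AlmostSubCriticalIn [Group G] [MeasurableSpace G] (m : Measure G) (U : Subgroup G)
    (A B : Set G) : Prop :=
  ∃ A' B' : Set G, MeasurableSet A' ∧ MeasurableSet B' ∧ A' ⊆ A ∧ B' ⊆ B ∧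
    m (A \ A') = 0 ∧ m (B \ B') = 0 ∧
    ∃ p q : G, SubCriticalInOpen m U ((p⁻¹ • A') ∩ (U : Set G))
      (((· * q⁻¹) '' B') ∩ (U : Set G))

/-- `(A,B)` is locally sub-critical: it is almost sub-critical in some open normal
subgroup of `G`. -/
def LocallySubCritical [Group G] [TopologicalSpace G] [MeasurableSpace G]
    (m : Measure G) (A B : Set G) : Prop :=
  ∃ U : Subgroup G, U.Normal ∧ IsOpen (U : Set G) ∧ AlmostSubCriticalIn m U A B

/-- `(m_G)_x^N`: the pushforward, under right multiplication by `x`, of the Haar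
probability measure `μN` of the closed subgroup `N`, viewed as a measure on `G`. -/
def fiberMeasure [Group G] [MeasurableSpace G] (N : Subgroup G)
    (μN : Measure ↥N) (x : G) : Measure G :=
  Measure.map (fun n : ↥N => (n : G) * x) μN

/-- `(A,B)` is critical with respect to the closed normal subgroup `N` (with Haar
probability measure `μN`). -/
def CriticalWrt [Group G] [MeasurableSpace G] (m : Measure G) (N : Subgroup G)
    (μN : Measure ↥N) (A B : Set G) : Prop :=
  ∃ X : Set G, MeasurableSet X ∧ m Xᶜ = 0 ∧
    ∃ Z : Set (G × G), MeasurableSet Z ∧ (m.prod m) Zᶜ = 0 ∧ Z ⊆ X ×ˢ X ∧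
      (∀ x ∈ X, fiberMeasure N μN x A = m A) ∧
      (∀ y ∈ X, fiberMeasure N μN y B = m B) ∧
      ∀ p ∈ Z, fiberMeasure N μN (p.1 * p.2) (A * B)
        = fiberMeasure N μN p.1 A + fiberMeasure N μN p.2 B

/-- `C⁺ ⊆ G/U`: the set of cosets of `U` meeting `C`. -/
def plusSet [Group G] (U : Subgroup G) (C : Set G) : Set (G ⧸ U) :=
  QuotientGroup.mk '' C

/-- `C ∩ Ux`, the part of `C` lying over the coset `x ∈ G/U`. -/
def cosetFiber [Group G] (U : Subgroup G) (C : Set G) (x : G ⧸ U) : Set G :=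
  C ∩ QuotientGroup.mk ⁻¹' {x}

/-- `C` is `U`-balanced: the identity coset belongs to `C⁺` and every coset in `C⁺`
carries a positive measure part of `C`. -/
def UBalanced [Group G] [MeasurableSpace G] (m : Measure G) (U : Subgroup G)
    (C : Set G) : Prop :=
  QuotientGroup.mk (1 : G) ∈ plusSet U C ∧
    ∀ x ∈ plusSet U C, 0 < m (cosetFiber U C x)

/-- A set is regular if it equals the closure of its interior. -/
def IsRegularSet {X : Type*} [TopologicalSpace X] (I : Set X) : Prop :=
  I = closure (interior I)

/-- `(I,J)` is left stable: `xJ ⊆ IJ` implies `x ∈ I`. -/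
def IsLeftStable [Group G] (I J : Set G) : Prop :=
  ∀ x : G, (x * ·) '' J ⊆ I * J → x ∈ I

/-- `(I,J)` is right stable: `Ix ⊆ IJ` implies `x ∈ J`. -/
def IsRightStable [Group G] (I J : Set G) : Prop :=
  ∀ x : G, (· * x) '' I ⊆ I * J → x ∈ J

/-- `(I,J)` is stable if it is both left and right stable. -/
def IsStablePair [Group G] (I J : Set G) : Prop :=
  IsLeftStable I J ∧ IsRightStable I J

end Defs

/-- A compact connected group `N` (with Haar probability measure `mN`) is a Kneser
group: every critical pair in `N` is covered by translates of closed intervals pulled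
back under a continuous surjective homomorphism onto the circle group (here `mT`
denotes the Haar probability measure of the circle group). -/
def IsKneserGroup {N : Type*} [Group N] [TopologicalSpace N] [MeasurableSpace N]
    (mN : Measure N) (mT : Measure Circle) : Prop :=
  ∀ C D : Set N, IsCriticalPair mN C D →
    ∃ ξ : N →* Circle, Continuous ξ ∧ Function.Surjective ξ ∧
      ∃ I J : Set Circle, IsClosedArc I ∧ IsClosedArc J ∧ mN (C * D) = mT (I * J) ∧
        ∃ s t : Circle, C ⊆ ⇑ξ ⁻¹' ((s * ·) '' I) ∧ D ⊆ ⇑ξ ⁻¹' ((· * t) '' J)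

end
open MeasureTheory Set Pointwise Function

open Filter Topology
open scoped ENNReal symmDiff

/-! Write `d(x, t) = m_N((x⁻¹C ∩ N) Δ ξ⁻¹(I t))`. For fixed `t` this is Borel in `x`: for open
`C` it is lower semicontinuous by inner regularity of `m_N`, and a Dynkin argument passes to Borel
`C`. For fixed `x` it is continuous in `t`, because right translation is continuous in measure.
By the triangle inequality for `Δ` and the triviality of the essential stabilizer of `I`, `γ(x)`
is the only zero of `d(x, ·)`. So for closed `K ⊆ M`, `γ(x) ∈ K` iff the infimum of `d(x, ·)` over
a countable dense subset of `K` vanishes, a Borel condition on `x`. -/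

theorem MeasureTheory.Measure.isMulRightInvariant_of_isProbabilityMeasure {G : Type*} [Group G]
    [TopologicalSpace G] [IsTopologicalGroup G] [LocallyCompactSpace G]
    [MeasurableSpace G] [BorelSpace G]
    (μ : Measure G) [μ.IsHaarMeasure] [IsProbabilityMeasure μ] : μ.IsMulRightInvariant :=
  ⟨fun g => by
    have : IsProbabilityMeasure (μ.map (· * g)) :=
      Measure.isProbabilityMeasure_map (measurable_mul_const g).aemeasurable
    exact Measure.isHaarMeasure_eq_of_isProbabilityMeasure _ _⟩

section LeftTranslates

variable {G Y : Type*} [Group G] [TopologicalSpace G] [IsTopologicalGroup G]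
  [TopologicalSpace Y] [MeasurableSpace Y] [OpensMeasurableSpace Y] {φ : Y → G}

theorem lowerSemicontinuous_measure_preimage_mul_left (μ : Measure Y) [IsFiniteMeasure μ]
    [μ.InnerRegularCompactLTTop] (hφ : Continuous φ) {U : Set G} (hU : IsOpen U) :
    LowerSemicontinuous fun x : G => μ ((x * φ ·) ⁻¹' U) := by
  intro x c hc
  have hxU : IsOpen ((x * φ ·) ⁻¹' U) := hU.preimage (by fun_prop)
  obtain ⟨K, hKU, hKc, hK⟩ := hxU.measurableSet.exists_lt_isCompact_of_ne_top
    (measure_ne_top μ _) hc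
  obtain ⟨V, hV, hVK⟩ := compact_open_separated_mul_left
    (hKc.image (show Continuous (x * φ ·) by fun_prop)) hU (image_subset_iff.2 hKU)
  have hW : (· * x⁻¹) ⁻¹' V ∈ 𝓝 x :=
    (continuous_mul_const x⁻¹).continuousAt.preimage_mem_nhds (by simpa using hV)
  filter_upwards [hW] with y hy
  refine hK.trans_le (measure_mono fun n hn => ?_)
  simpa [mul_assoc] using hVK (mul_mem_mul hy (mem_image_of_mem _ hn))

variable [MeasurableSpace G] [BorelSpace G]

theorem measurable_measure_preimage_mul_left (μ : Measure Y) [IsFiniteMeasure μ]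
    [μ.InnerRegularCompactLTTop] (hφ : Continuous φ) {A : Set G} (hA : MeasurableSet A) :
    Measurable fun x : G => μ ((x * φ ·) ⁻¹' A) := by
  have hφx (x : G) : Measurable (x * φ ·) := (continuous_const.mul hφ).measurable
  have hmap : Measurable fun x : G => μ.map (x * φ ·) := by
    refine .measure_of_isPiSystem BorelSpace.measurable_eq isPiSystem_isOpen (fun U hU => ?_) ?_
    · simp_rw [Measure.map_apply (hφx _) hU.measurableSet]
      exact (lowerSemicontinuous_measure_preimage_mul_left μ hφ hU).measurable
    · simp_rw [Measure.map_apply (hφx _) MeasurableSet.univ, preimage_univ]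
      exact measurable_const
  simpa only [Function.comp_def, Measure.map_apply (hφx _) hA] using
    (Measure.measurable_coe hA).comp hmap

theorem measurable_measure_preimage_mul_left_symmDiff (μ : Measure Y) [IsFiniteMeasure μ]
    [μ.InnerRegularCompactLTTop] (hφ : Continuous φ) {A : Set G} (hA : MeasurableSet A)
    {B : Set Y} (hB : MeasurableSet B) :
    Measurable fun x : G => μ (((x * φ ·) ⁻¹' A) ∆ B) := by
  have hφx (x : G) : Measurable (x * φ ·) := (continuous_const.mul hφ).measurable
  have hsplit (x : G) : μ (((x * φ ·) ⁻¹' A) ∆ B)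
      = μ.restrict Bᶜ ((x * φ ·) ⁻¹' A) + μ.restrict B ((x * φ ·) ⁻¹' Aᶜ) := by
    rw [measure_symmDiff_eq (hφx x hA).nullMeasurableSet hB.nullMeasurableSet,
      Measure.restrict_apply' hB.compl, Measure.restrict_apply' hB, sdiff_eq, sdiff_eq,
      preimage_compl, inter_comm B]
  simp_rw [hsplit]
  exact (measurable_measure_preimage_mul_left _ hφ hA).add
    (measurable_measure_preimage_mul_left _ hφ hA.compl)

end LeftTranslates

theorem tendsto_measure_symmDiff_of_tendsto_measure_symmDiff {α ι : Type*}
    [MeasurableSpace α] {μ : Measure α} {l : Filter ι} (A : Set α) {B : ι → Set α} {B₀ : Set α}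
    (h : Tendsto (fun i => μ (B i ∆ B₀)) l (𝓝 0)) :
    Tendsto (fun i => μ (A ∆ B i)) l (𝓝 (μ (A ∆ B₀))) := by
  have hupper : Tendsto (fun i => μ (A ∆ B₀) + μ (B i ∆ B₀)) l (𝓝 (μ (A ∆ B₀))) := by
    simpa using tendsto_const_nhds.add h
  have hlower : Tendsto (fun i => μ (A ∆ B₀) - μ (B i ∆ B₀)) l (𝓝 (μ (A ∆ B₀))) := by
    simpa using ENNReal.Tendsto.sub tendsto_const_nhds h (.inr ENNReal.zero_ne_top)
  refine tendsto_of_tendsto_of_tendsto_of_le_of_le hlower hupper (fun i => ?_) fun i => ?_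
  · rw [tsub_le_iff_right]
    exact measure_symmDiff_le _ _ _
  · rw [symmDiff_comm (B i)]
    exact measure_symmDiff_le _ _ _

theorem continuous_measure_symmDiff_preimage_image_mul_right {Y M : Type*} [TopologicalSpace Y]
    [MeasurableSpace Y] [BorelSpace Y] [R1Space Y] [Group M] [TopologicalSpace M]
    [IsTopologicalGroup M] [MeasurableSpace M] [BorelSpace M]
    {μ : Measure Y} [μ.InnerRegularCompactLTTop] {ν : Measure M} [IsLocallyFiniteMeasure ν]
    [ν.IsMulRightInvariant] {ξ : Y → M} (hξc : Continuous ξ) (hξ : MeasurePreserving ξ μ ν)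
    {I : Set M} (hI : MeasurableSet I) (hνI : ν I ≠ ∞) (A : Set Y) :
    Continuous fun t => μ (A ∆ (ξ ⁻¹' ((· * t) '' I))) := by
  let F : C(M, C(Y, M)) := ContinuousMap.curry ⟨fun p : M × Y => ξ p.2 * p.1⁻¹, by fun_prop⟩
  have hF (t : M) : ξ ⁻¹' ((· * t) '' I) = F t ⁻¹' I := by
    rw [image_mul_right]; rfl
  have hFmp (s : M) : MeasurePreserving (F s) μ ν := (measurePreserving_mul_right ν s⁻¹).comp hξ
  refine continuous_iff_continuousAt.2 fun t => ?_
  simp_rw [ContinuousAt, hF]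
  exact tendsto_measure_symmDiff_of_tendsto_measure_symmDiff A <|
    tendsto_measure_symmDiff_preimage_nhds_zero (F.continuous.tendsto t)
      (.of_forall hFmp) (hFmp t) hI.nullMeasurableSet hνI

section RightTranslates

variable {M : Type*} [Group M] [MeasurableSpace M] [MeasurableMul M]
  (ν : Measure M) [ν.IsMulRightInvariant]

theorem measure_image_mul_right_symmDiff (I : Set M) (s t : M) :
    ν (((· * s) '' I) ∆ ((· * t) '' I)) = ν (I ∆ ((· * (t * s⁻¹)) '' I)) := by
  have : ((· * s) '' I) ∆ ((· * t) '' I) = (· * s) '' (I ∆ ((· * (t * s⁻¹)) '' I)) := by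
    rw [image_symmDiff (mul_left_injective s), image_image]
    simp [mul_assoc]
  rw [this, image_mul_right, measure_preimage_mul_right]

theorem eq_of_measure_symmDiff_preimage_image_mul_right_eq_zero {Y : Type*} [MeasurableSpace Y]
    {μ : Measure Y} {ξ : Y → M} (hξ : MeasurePreserving ξ μ ν) {I : Set M}
    (hI : MeasurableSet I) (hstab : ∀ r : M, ν (I ∆ ((· * r) '' I)) = 0 → r = 1) {s t : M}
    (h : μ ((ξ ⁻¹' ((· * s) '' I)) ∆ (ξ ⁻¹' ((· * t) '' I))) = 0) : t = s := by
  have hmeas (r : M) : MeasurableSet ((· * r) '' I) := hI.const_smul (MulOpposite.op r)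
  rw [← preimage_symmDiff, hξ.measure_preimage ((hmeas s).symmDiff (hmeas t)).nullMeasurableSet,
    measure_image_mul_right_symmDiff] at h
  exact mul_inv_eq_one.1 (hstab _ h)

end RightTranslates

theorem iInf_eq_zero_iff_exists_eq_zero {K : Type*} [TopologicalSpace K] [CompactSpace K]
    {g : K → ℝ≥0∞} (hg : Continuous g) : ⨅ k, g k = 0 ↔ ∃ k, g k = 0 := by
  refine ⟨fun h => ?_, fun ⟨k, hk⟩ => nonpos_iff_eq_zero.mp (hk ▸ iInf_le g k)⟩
  cases isEmpty_or_nonempty K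
  · exact absurd (iInf_of_empty g ▸ h) ENNReal.top_ne_zero
  · obtain ⟨k, hk⟩ := (isCompact_range hg).sInf_mem (range_nonempty g)
    exact ⟨k, hk.trans h⟩

theorem measurable_of_eq_zero_iff {α M : Type*} [MeasurableSpace α] [TopologicalSpace M]
    [CompactSpace M] [SecondCountableTopology M] [MeasurableSpace M] [BorelSpace M]
    {d : α → M → ℝ≥0∞} (hmeas : ∀ t, Measurable (d · t)) (hcont : ∀ x, Continuous (d x))
    {f : α → M} (hf : ∀ x t, d x t = 0 ↔ t = f x) : Measurable f := by
  refine measurable_of_isClosed fun K hK => ?_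
  have : CompactSpace K := isCompact_iff_compactSpace.mp hK.isCompact
  obtain ⟨S, hSc, hSd⟩ := TopologicalSpace.exists_countable_dense K
  have : Countable S := hSc.to_subtype
  have hpre : f ⁻¹' K = {x | ⨅ k : S, d x k = 0} := by
    ext x
    have hcontK : Continuous fun k : K => d x k := (hcont x).comp continuous_subtype_val
    rw [mem_ofPred_eq, hSd.ciInf' hcontK, iInf_eq_zero_iff_exists_eq_zero hcontK]
    refine ⟨fun hx => ⟨⟨f x, hx⟩, (hf x _).2 rfl⟩, fun ⟨k, hk⟩ => ?_⟩
    rw [mem_preimage, ← (hf x k).1 hk]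
    exact k.2
  rw [hpre]
  exact measurableSet_eq_fun (.iInf fun k => hmeas k) measurable_const

theorem translation_parameter_is_measurable_general
    {G M : Type*}
    [Group G] [TopologicalSpace G] [IsTopologicalGroup G] [CompactSpace G]
    [MeasurableSpace G] [BorelSpace G]
    [Group M] [TopologicalSpace M] [IsTopologicalGroup M] [CompactSpace M]
    [SecondCountableTopology M] [MeasurableSpace M] [BorelSpace M]
    (mM : Measure M) [mM.IsHaarMeasure] [IsProbabilityMeasure mM]
    (N : Subgroup G) (hNclosed : IsClosed (N : Set G))
    (μN : Measure ↥N) [μN.IsHaarMeasure] [IsProbabilityMeasure μN]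
    (C : Set G) (hC : MeasurableSet C) (I : Set M) (hI : MeasurableSet I)
    (ξ : ↥N →* M) (hξc : Continuous ξ) (hξs : Function.Surjective ξ)
    (X : Set G)
    (γ : G → M)
    (hsim : ∀ x ∈ X,
      μN (symmDiff {n : ↥N | x * (n : G) ∈ C} (⇑ξ ⁻¹' ((· * γ x) '' I))) = 0)
    (hstab : ∀ t : M, mM (symmDiff I ((· * t) '' I)) = 0 → t = 1) :
    Measurable fun x : X => γ ↑x := by
  have : CompactSpace N := isCompact_iff_compactSpace.mp hNclosed.isCompact
  have := mM.isMulRightInvariant_of_isProbabilityMeasure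
  have hξ : MeasurePreserving ξ μN mM := ξ.measurePreserving hξc hξs (by simp)
  have hBmeas (t : M) : MeasurableSet (ξ ⁻¹' ((· * t) '' I)) :=
    hξc.measurable (hI.const_smul (MulOpposite.op t))
  refine measurable_of_eq_zero_iff
    (d := fun (x : X) t => μN ({n : N | x * (n : G) ∈ C} ∆ (ξ ⁻¹' ((· * t) '' I))))
    (fun t => ?_) (fun x => ?_) fun x t => ⟨fun h => ?_, fun h => h ▸ hsim x x.2⟩
  · exact (measurable_measure_preimage_mul_left_symmDiff μN continuous_subtype_val hC
      (hBmeas t)).comp measurable_subtype_coe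
  · exact continuous_measure_symmDiff_preimage_image_mul_right hξc hξ hI (measure_ne_top _ _) _
  · refine eq_of_measure_symmDiff_preimage_image_mul_right_eq_zero mM hξ hI hstab
      (nonpos_iff_eq_zero.1 ?_)
    calc _ ≤ μN ((ξ ⁻¹' ((· * γ x) '' I)) ∆ {n : N | x * (n : G) ∈ C})
          + μN ({n : N | x * (n : G) ∈ C} ∆ (ξ ⁻¹' ((· * t) '' I))) :=
          measure_symmDiff_le _ _ _
      _ = 0 := by rw [symmDiff_comm, hsim x x.2, h, zero_add]

/-- Lemma `borel`: if the fibers `x⁻¹C ∩ N` agree, up to `m_N`-null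
sets, with pullbacks `ξ⁻¹(I·γ(x))` of right translates of a set `I ⊆ M` with trivial
right essential stabilizer, then `γ` is Borel measurable on the conull set `X`. -/
theorem translation_parameter_is_measurable
    {G M : Type*}
    [Group G] [TopologicalSpace G] [IsTopologicalGroup G] [CompactSpace G] [T2Space G]
    [MeasurableSpace G] [BorelSpace G]
    [Group M] [TopologicalSpace M] [IsTopologicalGroup M] [CompactSpace M]
    [SecondCountableTopology M] [T2Space M] [MeasurableSpace M] [BorelSpace M]
    (mG : Measure G) [mG.IsHaarMeasure] [IsProbabilityMeasure mG]
    (mM : Measure M) [mM.IsHaarMeasure] [IsProbabilityMeasure mM]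
    (N : Subgroup G) (hNclosed : IsClosed (N : Set G))
    (μN : Measure ↥N) [μN.IsHaarMeasure] [IsProbabilityMeasure μN]
    (C : Set G) (hC : MeasurableSet C) (I : Set M) (hI : MeasurableSet I)
    (ξ : ↥N →* M) (hξc : Continuous ξ) (hξs : Function.Surjective ξ)
    (X : Set G) (hX : MeasurableSet X) (hXco : mG Xᶜ = 0)
    (γ : G → M)
    (hsim : ∀ x ∈ X,
      μN (symmDiff {n : ↥N | x * (n : G) ∈ C} (⇑ξ ⁻¹' ((· * γ x) '' I))) = 0)
    (hstab : ∀ t : M, mM (symmDiff I ((· * t) '' I)) = 0 → t = 1) :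
    Measurable fun x : X => γ ↑x :=
  translation_parameter_is_measurable_general mM N hNclosed μN C hC I hI ξ hξc hξs X γ hsim hstab
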